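/- Define the NRP mean memory transmissivity τ̄(p,x) := (p/(2−p))·(1 + x·(1−p))/(1 − x·(1−p)) for success probability p ∈ (0,1] and per-time-step memory decay factor x ∈ [0,1). Then for every fixed τ ∈ (0,1] and x ∈ [0,1), the quantity −log₂(1 − √η·τ·τ̄(τ·√η, x)), divided by η, converges as η → 0⁺ to τ²·(1+x)/(2·(1−x)·ln 2). Thus at long distances the memory-assisted single-repeater bound scales linearly in η, i.e. it regresses to repeaterless (direct-transmission) scaling rather than the ideal-repeater √η scaling. -/

import Mathlib

/-!
Writing `τ̄(p,x) = p · s(p,x)` with `s` continuous at `p = 0`, the square roots cancel and the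
argument of the logarithm becomes `1 - η · v(η)` with `v(η) = τ² · s(τ√η, x) → τ² (1+x)/(2(1-x))`.
Since `-log₂(1 - t) = t / ln 2 + o(t)`, dividing by `η` gives the limit.
-/

/-- The NRP mean memory transmissivity
`τ̄(p,x) = (p/(2-p))·(1 + x·(1-p))/(1 - x·(1-p))` for half-link success
probability `p` and per-time-step memory decay factor `x`. -/
noncomputable def tauBar (p x : ℝ) : ℝ :=
  (p / (2 - p)) * (1 + x * (1 - p)) / (1 - x * (1 - p))

open Filter Real Topology Asymptotics

theorem HasDerivAt.tendsto_comp_mul_div {F : ℝ → ℝ} {L c : ℝ} (hF : HasDerivAt F L 0)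
    (hF0 : F 0 = 0) {l : Filter ℝ} (hl : l ≤ 𝓝[≠] 0) {v : ℝ → ℝ} (hv : Tendsto v l (𝓝 c)) :
    Tendsto (fun η => F (η * v η) / η) l (𝓝 (L * c)) := by
  have hw : Tendsto (fun η => η * v η) l (𝓝 0) := by
    simpa using (tendsto_id.mono_left (hl.trans nhdsWithin_le_nhds)).mul hv
  have hwO : (fun η => η * v η) =O[l] fun η => η := by
    simpa using (isBigO_refl (fun η => η) l).mul (hv.isBigO_one ℝ)
  have hrem : (fun η => F (η * v η) - η * v η * L) =o[l] fun η => η * v η := by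
    simpa [hF0, Function.comp_def] using hF.isLittleO.comp_tendsto hw
  have hlim := (hrem.trans_isBigO hwO).tendsto_div_nhds_zero.add (hv.const_mul L)
  rw [zero_add] at hlim
  refine hlim.congr' ?_
  filter_upwards [hl self_mem_nhdsWithin] with η (hη : η ≠ 0)
  field_simp
  ring

theorem hasDerivAt_neg_logb_one_sub (b : ℝ) :
    HasDerivAt (fun t => -logb b (1 - t)) (log b)⁻¹ 0 := by
  have h : HasDerivAt (fun t => log (1 - t)) (-1) 0 := by
    simpa using ((hasDerivAt_id (0 : ℝ)).const_sub 1).log (by norm_num)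
  simpa [logb, neg_div] using (h.div_const (log b)).fun_neg

noncomputable def tauBarSlope (p x : ℝ) : ℝ :=
  (1 + x * (1 - p)) / ((2 - p) * (1 - x * (1 - p)))

theorem tauBar_eq_mul_tauBarSlope (p x : ℝ) : tauBar p x = p * tauBarSlope p x := by
  rw [tauBar, tauBarSlope, div_mul_eq_mul_div, div_div, mul_div_assoc]

theorem tauBarSlope_zero (x : ℝ) : tauBarSlope 0 x = (1 + x) / (2 * (1 - x)) := by
  simp [tauBarSlope]

theorem continuousAt_tauBarSlope_zero {x : ℝ} (hx : x ≠ 1) :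
    ContinuousAt (tauBarSlope · x) 0 := by
  refine ContinuousAt.div (by fun_prop) (by fun_prop) ?_
  simpa using sub_ne_zero.mpr hx.symm

theorem memory_repeater_bound_linear_scaling_general (τ x : ℝ)
    (hx1 : x < 1) :
    Filter.Tendsto
      (fun η : ℝ =>
        (-Real.logb 2 (1 - Real.sqrt η * τ * tauBar (τ * Real.sqrt η) x)) / η)
      (nhdsWithin 0 (Set.Ioi 0))
      (nhds (τ ^ 2 * (1 + x) / (2 * (1 - x) * Real.log 2))) := by
  have hp : Tendsto (fun η => τ * √η) (𝓝[>] 0) (𝓝 0) := by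
    simpa using ((continuous_sqrt.tendsto' 0 0 sqrt_zero).const_mul τ).mono_left
      nhdsWithin_le_nhds
  have hslope := ((continuousAt_tauBarSlope_zero hx1.ne).tendsto.comp hp).const_mul (τ ^ 2)
  have hlim := (hasDerivAt_neg_logb_one_sub 2).tendsto_comp_mul_div (by simp)
    (nhdsGT_le_nhdsNE 0) hslope
  have hlog2 : log 2 ≠ 0 := by positivity
  have hx : 1 - x ≠ 0 := sub_ne_zero.mpr hx1.ne'
  convert hlim.congr' ?_ using 2
  · rw [tauBarSlope_zero]
    field_simp
  · filter_upwards [self_mem_nhdsWithin] with η (hη : 0 < η)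
    rw [Function.comp_apply, tauBar_eq_mul_tauBarSlope]
    congr 4
    linear_combination -(τ ^ 2 * tauBarSlope (τ * √η) x) * mul_self_sqrt hη.le

/-- For fixed constant node efficiency `τ ∈ (0,1]` and memory decay factor
`x ∈ [0,1)`, the memory-assisted single-repeater bound
`-log₂(1 - √η·τ·τ̄(τ·√η, x))`, divided by the end-to-end transmissivity `η`,
converges as `η → 0⁺` to `τ²·(1+x)/(2·(1-x)·ln 2)`: at long distances the bound
scales linearly in `η`, i.e. like repeaterless (direct-transmission) scaling. -/
theorem memory_repeater_bound_linear_scaling (τ x : ℝ)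
    (hτ0 : 0 < τ) (hτ1 : τ ≤ 1) (hx0 : 0 ≤ x) (hx1 : x < 1) :
    Filter.Tendsto
      (fun η : ℝ =>
        (-Real.logb 2 (1 - Real.sqrt η * τ * tauBar (τ * Real.sqrt η) x)) / η)
      (nhdsWithin 0 (Set.Ioi 0))
      (nhds (τ ^ 2 * (1 + x) / (2 * (1 - x) * Real.log 2))) :=
  memory_repeater_bound_linear_scaling_general τ x hx1
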